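/- arXiv:2312.03363 — 7 statements merged into one kernel-verified Lean document; each statement's English description precedes it below -/
import Mathlib

section
/- Let x, x̂ : I → ℝ² be differentiable curves on an interval I forming a Darboux pair with parameter λ ∈ ℝ \ {0} and polarization m : I → ℝ \ {0}, and suppose |x'(t)|² ≠ 0 for all t. Then x̂'(t) = −(λ/(m(t)|x'(t)|²)) · ( |x̂(t)−x(t)|² x'(t) − 2⟨x̂(t)−x(t), x'(t)⟩ (x̂(t)−x(t)) ) for all t ∈ I. -/
/-- The split-complex product on `ℝ²`: `(a,b)·(c,d) = (ac+bd, ad+bc)`. -/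
def sprod (u v : ℝ × ℝ) : ℝ × ℝ := (u.1 * v.1 + u.2 * v.2, u.1 * v.2 + u.2 * v.1)

/-- The Lorentz bilinear form `⟨(a,b),(c,d)⟩ = ac - bd`. -/
def lin (u v : ℝ × ℝ) : ℝ := u.1 * v.1 - u.2 * v.2

/-- The Lorentz squared norm `|(a,b)|² = a² - b²`. -/
def lsq (u : ℝ × ℝ) : ℝ := u.1 ^ 2 - u.2 ^ 2

/-- `x, x̂` form a Darboux pair with parameter `λ` and polarization `m` on `I`,
with respect to given derivative functions `x', x̂'`:
`x'·x̂' = (λ/m)(x̂−x)·(x̂−x)` pointwise on `I`. -/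
def DarbouxPair (I : Set ℝ) (x x' xh xh' : ℝ → ℝ × ℝ) (lam : ℝ) (m : ℝ → ℝ) : Prop :=
  ∀ t ∈ I, sprod (x' t) (xh' t) = (lam / m t) • sprod (xh t - x t) (xh t - x t)

/-!
Multiplying the Darboux equation `x'·x̂' = (λ/m)(x̂−x)²` by the split-complex conjugate of `x'`
solves it for `x̂'`, because `ū·u = |u|²` is real. The formula then follows from the
split-complex identity `v̄·d² = 2⟨d,v⟩ d − |d|² v` (`v = x'`, `d = x̂−x`), which is
`(d v̄ + d̄ v)·d = 2⟨d,v⟩ d`.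
-/

def sconj (u : ℝ × ℝ) : ℝ × ℝ := (u.1, -u.2)

lemma sprod_smul_right (c : ℝ) (u v : ℝ × ℝ) : sprod u (c • v) = c • sprod u v := by
  ext <;> simp only [sprod, Prod.smul_fst, Prod.smul_snd, smul_eq_mul] <;> ring

lemma sconj_sprod_sprod (v w : ℝ × ℝ) : sprod (sconj v) (sprod v w) = lsq v • w := by
  ext <;> simp only [sprod, sconj, lsq, Prod.smul_fst, Prod.smul_snd, smul_eq_mul] <;> ring

lemma sconj_sprod_sq (v d : ℝ × ℝ) :
    sprod (sconj v) (sprod d d) = (2 * lin d v) • d - lsq d • v := by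
  ext <;> simp only [sprod, sconj, lin, lsq, Prod.smul_fst, Prod.smul_snd, Prod.fst_sub,
    Prod.snd_sub, smul_eq_mul] <;> ring

lemma eq_inv_smul_sconj_sprod {v w z : ℝ × ℝ} (hv : lsq v ≠ 0) (h : sprod v w = z) :
    w = (lsq v)⁻¹ • sprod (sconj v) z := by
  rw [← h, sconj_sprod_sprod, inv_smul_smul₀ hv]

theorem darboux_deriv_general (I : Set ℝ)
    (x xh x' xh' : ℝ → ℝ × ℝ) (lam : ℝ)
    (m : ℝ → ℝ)
    (hpair : DarbouxPair I x x' xh xh' lam m)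
    (hsp : ∀ t ∈ I, lsq (x' t) ≠ 0) :
    ∀ t ∈ I, xh' t = (-(lam / (m t * lsq (x' t)))) •
      (lsq (xh t - x t) • x' t - (2 * lin (xh t - x t) (x' t)) • (xh t - x t)) := by
  intro t ht
  rw [eq_inv_smul_sconj_sprod (hsp t ht) (hpair t ht), sprod_smul_right, sconj_sprod_sq]
  module

/-- For a Darboux pair with `x` spacelike (non-lightlike), the derivative of `x̂` is
`x̂' = −(λ/(m|x'|²)) (|x̂−x|² x' − 2⟨x̂−x, x'⟩ (x̂−x))`. -/
theorem darboux_deriv (I : Set ℝ) (hI : I.OrdConnected)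
    (x xh x' xh' : ℝ → ℝ × ℝ) (lam : ℝ) (hlam : lam ≠ 0)
    (m : ℝ → ℝ) (hm : ∀ t ∈ I, m t ≠ 0)
    (hx : ∀ t ∈ I, HasDerivAt x (x' t) t)
    (hxh : ∀ t ∈ I, HasDerivAt xh (xh' t) t)
    (hpair : DarbouxPair I x x' xh xh' lam m)
    (hsp : ∀ t ∈ I, lsq (x' t) ≠ 0) :
    ∀ t ∈ I, xh' t = (-(lam / (m t * lsq (x' t)))) •
      (lsq (xh t - x t) • x' t - (2 * lin (xh t - x t) (x' t)) • (xh t - x t)) :=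
  darboux_deriv_general I x xh x' xh' lam m hpair hsp
end

section
/- Let x, x̂ : I → ℝ² be differentiable curves forming a Darboux pair with parameter λ ∈ ℝ \ {0} and the arc-length polarization m(t) = 1/|x'(t)|², where |x'(t)|² > 0 for all t. Then the function h(t) = |x̂(t)−x(t)|² satisfies the differential equation h'(t) = 2⟨x̂(t)−x(t), x'(t)⟩ (λ h(t) − 1) for all t ∈ I. -/
lemma lin_sub_right (u v w : ℝ × ℝ) : lin u (v - w) = lin u v - lin u w := by
  simp only [lin, Prod.fst_sub, Prod.snd_sub]
  ring

lemma HasDerivAt.lsq {f : ℝ → ℝ × ℝ} {f' : ℝ × ℝ} {t : ℝ} (hf : HasDerivAt f f' t) :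
    HasDerivAt (fun s => lsq (f s)) (2 * lin (f t) f') t := by
  have h₁ : HasDerivAt (fun s => (f s).1) f'.1 t := hf.fst
  have h₂ : HasDerivAt (fun s => (f s).2) f'.2 t := hf.snd
  refine ((h₁.fun_pow 2).fun_sub (h₂.fun_pow 2)).congr_deriv ?_
  simp only [lin]
  push_cast
  ring

lemma lin_mul_lsq_of_sprod_eq {v w d : ℝ × ℝ} {μ : ℝ} (h : sprod v w = μ • sprod d d) :
    lin d w * lsq v = μ * lsq d * lin d v := by
  obtain ⟨h₁, h₂⟩ := Prod.ext_iff.mp h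
  simp only [sprod, lin, lsq, Prod.smul_fst, Prod.smul_snd, smul_eq_mul] at h₁ h₂ ⊢
  linear_combination (d.1 * v.1 + d.2 * v.2) * h₁ - (d.2 * v.1 + d.1 * v.2) * h₂

theorem darboux_arclength_ode_general (I : Set ℝ)
    (x xh x' xh' : ℝ → ℝ × ℝ) (lam : ℝ)
    (m : ℝ → ℝ)
    (hsp : ∀ t ∈ I, 0 < lsq (x' t))
    (hm : ∀ t ∈ I, m t = 1 / lsq (x' t))
    (hx : ∀ t ∈ I, HasDerivAt x (x' t) t)
    (hxh : ∀ t ∈ I, HasDerivAt xh (xh' t) t)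
    (hpair : DarbouxPair I x x' xh xh' lam m) :
    ∀ t ∈ I, HasDerivAt (fun s => lsq (xh s - x s))
      (2 * lin (xh t - x t) (x' t) * (lam * lsq (xh t - x t) - 1)) t := by
  intro t ht
  have hrel : sprod (x' t) (xh' t) = (lam * lsq (x' t)) • sprod (xh t - x t) (xh t - x t) := by
    rw [hpair t ht, hm t ht, one_div, div_inv_eq_mul]
  have hlin : lin (xh t - x t) (xh' t) = lam * lsq (xh t - x t) * lin (xh t - x t) (x' t) :=
    mul_right_cancel₀ (hsp t ht).ne' (by rw [lin_mul_lsq_of_sprod_eq hrel]; ring)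
  convert ((hxh t ht).fun_sub (hx t ht)).lsq using 1
  rw [lin_sub_right, hlin]
  ring

/-- For a Darboux pair with the arc-length polarization `m = 1/|x'|²` of `x`,
the function `h = |x̂−x|²` satisfies `h' = 2⟨x̂−x, x'⟩(λh − 1)`. -/
theorem darboux_arclength_ode (I : Set ℝ)
    (x xh x' xh' : ℝ → ℝ × ℝ) (lam : ℝ) (hlam : lam ≠ 0)
    (m : ℝ → ℝ)
    (hsp : ∀ t ∈ I, 0 < lsq (x' t))
    (hm : ∀ t ∈ I, m t = 1 / lsq (x' t))
    (hx : ∀ t ∈ I, HasDerivAt x (x' t) t)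
    (hxh : ∀ t ∈ I, HasDerivAt xh (xh' t) t)
    (hpair : DarbouxPair I x x' xh xh' lam m) :
    ∀ t ∈ I, HasDerivAt (fun s => lsq (xh s - x s))
      (2 * lin (xh t - x t) (x' t) * (lam * lsq (xh t - x t) - 1)) t :=
  darboux_arclength_ode_general I x xh x' xh' lam m hsp hm hx hxh hpair
end

section
/- Let x, x̂ : I → ℝ² be differentiable curves forming a Darboux pair with parameter λ ∈ ℝ \ {0} and polarization m : I → ℝ \ {0}. Suppose x is spacelike, i.e. |x'(t)|² > 0 for all t, and x̂(t) ≠ x(t) for all t. Then x̂ has no singular points: x̂'(t) ≠ 0 for all t ∈ I. -/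
theorem sprod_zero_right (u : ℝ × ℝ) : sprod u 0 = 0 := by
  simp [sprod]

theorem sprod_self_fst (u : ℝ × ℝ) : (sprod u u).1 = u.1 ^ 2 + u.2 ^ 2 := by
  simp only [sprod]
  ring

theorem sprod_self_ne_zero {u : ℝ × ℝ} (hu : u ≠ 0) : sprod u u ≠ 0 := by
  have hpos : 0 < (sprod u u).1 := by
    rw [sprod_self_fst]
    rcases ne_or_eq u.1 0 with h1 | h1
    · positivity
    · have h2 : u.2 ≠ 0 := fun h2 => hu (Prod.ext h1 h2)
      positivity
  exact fun h => hpos.ne' (by rw [h, Prod.fst_zero])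

theorem DarbouxPair.sprod_deriv_ne_zero {I : Set ℝ} {x x' xh xh' : ℝ → ℝ × ℝ} {lam : ℝ}
    {m : ℝ → ℝ} (hpair : DarbouxPair I x x' xh xh' lam m) (hlam : lam ≠ 0) {t : ℝ} (ht : t ∈ I)
    (hm : m t ≠ 0) (hne : xh t ≠ x t) : sprod (x' t) (xh' t) ≠ 0 := by
  rw [hpair t ht]
  exact smul_ne_zero (div_ne_zero hlam hm) (sprod_self_ne_zero (sub_ne_zero.mpr hne))

theorem darboux_no_singular_general (I : Set ℝ)
    (x xh x' xh' : ℝ → ℝ × ℝ) (lam : ℝ) (hlam : lam ≠ 0)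
    (m : ℝ → ℝ) (hm : ∀ t ∈ I, m t ≠ 0)
    (hpair : DarbouxPair I x x' xh xh' lam m)
    (hne : ∀ t ∈ I, xh t ≠ x t) :
    ∀ t ∈ I, xh' t ≠ 0 := by
  intro t ht h0
  apply hpair.sprod_deriv_ne_zero hlam ht (hm t ht) (hne t ht)
  rw [h0, sprod_zero_right]

/-- A Darboux transformation of a spacelike curve has no singular points. -/
theorem darboux_no_singular (I : Set ℝ)
    (x xh x' xh' : ℝ → ℝ × ℝ) (lam : ℝ) (hlam : lam ≠ 0)
    (m : ℝ → ℝ) (hm : ∀ t ∈ I, m t ≠ 0)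
    (hx : ∀ t ∈ I, HasDerivAt x (x' t) t)
    (hxh : ∀ t ∈ I, HasDerivAt xh (xh' t) t)
    (hpair : DarbouxPair I x x' xh xh' lam m)
    (hsp : ∀ t ∈ I, 0 < lsq (x' t))
    (hne : ∀ t ∈ I, xh t ≠ x t) :
    ∀ t ∈ I, xh' t ≠ 0 :=
  darboux_no_singular_general I x xh x' xh' lam hlam m hm hpair hne
end

section
/- Let r > 0 and c₁, c₂ ∈ ℝ, and let x(t) = (r·sec(t) + c₁, r·tan(t) + c₂) be a timelike circle in ℝ². Then 𝒫(x(t)) tends to the point (π/2 + arctan(c₁−c₂), π/2 − arctan(c₁−c₂)) as t → π/2 from the left; in particular the sum of the coordinates of the limit equals π and the difference of its coordinates lies in the open interval (−π, π), so the limit lies on the null infinity boundary of the Penrose diagram. -/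
open Real Filter

/-- The Penrose map `𝒫(x₁,x₂) = (arctan(x₁+x₂) + arctan(x₁−x₂), arctan(x₁+x₂) − arctan(x₁−x₂))`. -/
noncomputable def Penrose (v : ℝ × ℝ) : ℝ × ℝ :=
  (arctan (v.1 + v.2) + arctan (v.1 - v.2), arctan (v.1 + v.2) - arctan (v.1 - v.2))

/-!
On the circle, `x₁ + x₂ = r (sec t + tan t) + (c₁ + c₂)` and `x₁ - x₂ = r (sec t - tan t) + (c₁ - c₂)`.
Since `sec² - tan² = 1`, the factor `sec t - tan t` is the reciprocal of `sec t + tan t`, which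
blows up as `t → π/2⁻`. So `arctan (x₁ + x₂) → π/2` while `arctan (x₁ - x₂) → arctan (c₁ - c₂)`.
-/

theorem Penrose.tendsto_of_tendsto_add_atTop {α : Type*} {l : Filter α} {x : α → ℝ × ℝ} {a : ℝ}
    (hadd : Tendsto (fun t => (x t).1 + (x t).2) l atTop)
    (hsub : Tendsto (fun t => (x t).1 - (x t).2) l (nhds a)) :
    Tendsto (fun t => Penrose (x t)) l (nhds (π / 2 + arctan a, π / 2 - arctan a)) := by
  have hplus : Tendsto (fun t => arctan ((x t).1 + (x t).2)) l (nhds (π / 2)) :=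
    (tendsto_arctan_atTop.mono_right nhdsWithin_le_nhds).comp hadd
  have hminus : Tendsto (fun t => arctan ((x t).1 - (x t).2)) l (nhds (arctan a)) :=
    (continuous_arctan.tendsto a).comp hsub
  exact (hplus.add hminus).prodMk_nhds (hplus.sub hminus)

theorem two_mul_arctan_mem_Ioo (a : ℝ) : 2 * arctan a ∈ Set.Ioo (-π) π := by
  constructor <;> linarith [neg_pi_div_two_lt_arctan a, arctan_lt_pi_div_two a]

/-- Where `cos t = 0` both sides are `0`, by the conventions `x / 0 = 0` and `0⁻¹ = 0`. -/
theorem inv_cos_sub_tan_eq_inv (t : ℝ) : (cos t)⁻¹ - tan t = ((cos t)⁻¹ + tan t)⁻¹ := by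
  by_cases hcos : cos t = 0
  · simp [tan_eq_sin_div_cos, hcos]
  · refine (inv_eq_of_mul_eq_one_left ?_).symm
    rw [tan_eq_sin_div_cos]
    field_simp
    linear_combination (-1) * sin_sq_add_cos_sq t

theorem tendsto_inv_cos_add_tan_pi_div_two :
    Tendsto (fun t => (cos t)⁻¹ + tan t) (nhdsWithin (π / 2) (Set.Iio (π / 2))) atTop :=
  tendsto_cos_pi_div_two.inv_tendsto_nhdsGT_zero.atTop_add_atTop tendsto_tan_pi_div_two

theorem tendsto_inv_cos_sub_tan_pi_div_two :
    Tendsto (fun t => (cos t)⁻¹ - tan t) (nhdsWithin (π / 2) (Set.Iio (π / 2))) (nhds 0) :=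
  (tendsto_inv_atTop_zero.comp tendsto_inv_cos_add_tan_pi_div_two).congr fun t =>
    (inv_cos_sub_tan_eq_inv t).symm

/-- A timelike circle `x(t) = (r sec t + c₁, r tan t + c₂)` blows up, in the Penrose
diagram, to the point `(π/2 + arctan(c₁−c₂), π/2 − arctan(c₁−c₂))` as `t → π/2⁻`;
the coordinates of the limit sum to `π` and their difference lies in `(−π, π)`,
so the limit is at the null infinity. -/
theorem timelike_circle_null_infinity (r c₁ c₂ : ℝ) (hr : 0 < r)
    (x : ℝ → ℝ × ℝ) (hx : ∀ t, x t = (r * (cos t)⁻¹ + c₁, r * tan t + c₂)) :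
    Tendsto (fun t => Penrose (x t)) (nhdsWithin (π / 2) (Set.Iio (π / 2)))
      (nhds (π / 2 + arctan (c₁ - c₂), π / 2 - arctan (c₁ - c₂))) ∧
    (π / 2 + arctan (c₁ - c₂)) + (π / 2 - arctan (c₁ - c₂)) = π ∧
    (π / 2 + arctan (c₁ - c₂)) - (π / 2 - arctan (c₁ - c₂)) ∈ Set.Ioo (-π) π := by
  have hadd : ∀ t, (x t).1 + (x t).2 = r * ((cos t)⁻¹ + tan t) + (c₁ + c₂) := fun t => by
    rw [hx]; ring
  have hsub : ∀ t, (x t).1 - (x t).2 = r * ((cos t)⁻¹ - tan t) + (c₁ - c₂) := fun t => by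
    rw [hx]; ring
  refine ⟨Penrose.tendsto_of_tendsto_add_atTop ?_ ?_, by ring, ?_⟩
  · simp only [hadd]
    exact tendsto_atTop_add_const_right _ _
      (tendsto_inv_cos_add_tan_pi_div_two.const_mul_atTop hr)
  · simpa only [hsub, mul_zero, zero_add] using
      (tendsto_inv_cos_sub_tan_pi_div_two.const_mul r).add_const (c₁ - c₂)
  · convert two_mul_arctan_mem_Ioo (c₁ - c₂) using 1
    ring
end

section
/- Let r > 0 and c₁, c₂ ∈ ℝ, and let x(t) = (r·tan(t) + c₁, r·sec(t) + c₂) be a spacelike circle in ℝ². Then 𝒫(x(t)) tends to the point (π/2 + arctan(c₁−c₂), π/2 − arctan(c₁−c₂)) as t → π/2 from the left; in particular the sum of the coordinates of the limit equals π and the difference of its coordinates lies in the open interval (−π, π), so the limit lies on the null infinity boundary of the Penrose diagram. -/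
open Real Filter

/-!
Both arguments of the arctangents in `𝒫` are affine in `tan t ± sec t`. As `t → π/2⁻`,
`tan t + sec t → +∞`, while `tan t - sec t = -cos t / (1 + sin t) → 0`. Hence the first
arctangent tends to `π/2` and the second to `arctan (c₁ - c₂)`.
-/

open Topology

theorem tan_sub_inv_cos {t : ℝ} (h : cos t ≠ 0) : tan t - (cos t)⁻¹ = -cos t / (1 + sin t) := by
  have hsin : 1 + sin t ≠ 0 := by
    intro hs
    apply h
    nlinarith [sin_sq_add_cos_sq t]
  rw [tan_eq_sin_div_cos]
  field_simp
  nlinarith [sin_sq_add_cos_sq t]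

theorem tendsto_tan_add_inv_cos_pi_div_two :
    Tendsto (fun t => tan t + (cos t)⁻¹) (𝓝[<] (π / 2)) atTop :=
  tendsto_tan_pi_div_two.atTop_add_atTop tendsto_cos_pi_div_two.inv_tendsto_nhdsGT_zero

theorem tendsto_tan_sub_inv_cos_pi_div_two :
    Tendsto (fun t => tan t - (cos t)⁻¹) (𝓝[<] (π / 2)) (𝓝 0) := by
  have hcont : ContinuousAt (fun t => -cos t / (1 + sin t)) (π / 2) :=
    (continuous_cos.neg.continuousAt).div (continuous_const.add continuous_sin).continuousAt
      (by norm_num)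
  have hlim : Tendsto (fun t => -cos t / (1 + sin t)) (𝓝[<] (π / 2)) (𝓝 0) := by
    simpa using hcont.tendsto.mono_left nhdsWithin_le_nhds
  refine hlim.congr' ?_
  filter_upwards [tendsto_cos_pi_div_two.eventually self_mem_nhdsWithin] with t ht
  exact (tan_sub_inv_cos (ne_of_gt ht)).symm

theorem tendsto_penrose_of_tendsto_add_atTop {α : Type*} {l : Filter α} {x : α → ℝ × ℝ} {c : ℝ}
    (hadd : Tendsto (fun a => (x a).1 + (x a).2) l atTop)
    (hsub : Tendsto (fun a => (x a).1 - (x a).2) l (𝓝 c)) :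
    Tendsto (fun a => Penrose (x a)) l (𝓝 (π / 2 + arctan c, π / 2 - arctan c)) := by
  have hplus := (tendsto_arctan_atTop.mono_right nhdsWithin_le_nhds).comp hadd
  have hminus := (continuous_arctan.tendsto c).comp hsub
  exact (hplus.add hminus).prodMk_nhds (hplus.sub hminus)

/-- A spacelike circle `x(t) = (r tan t + c₁, r sec t + c₂)` blows up, in the Penrose
diagram, to the point `(π/2 + arctan(c₁−c₂), π/2 − arctan(c₁−c₂))` as `t → π/2⁻`;
the coordinates of the limit sum to `π` and their difference lies in `(−π, π)`,
so the limit is at the null infinity. -/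
theorem spacelike_circle_null_infinity (r c₁ c₂ : ℝ) (hr : 0 < r)
    (x : ℝ → ℝ × ℝ) (hx : ∀ t, x t = (r * tan t + c₁, r * (cos t)⁻¹ + c₂)) :
    Tendsto (fun t => Penrose (x t)) (nhdsWithin (π / 2) (Set.Iio (π / 2)))
      (nhds (π / 2 + arctan (c₁ - c₂), π / 2 - arctan (c₁ - c₂))) ∧
    (π / 2 + arctan (c₁ - c₂)) + (π / 2 - arctan (c₁ - c₂)) = π ∧
    (π / 2 + arctan (c₁ - c₂)) - (π / 2 - arctan (c₁ - c₂)) ∈ Set.Ioo (-π) π := by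
  refine ⟨?_, by ring, ?_⟩
  · apply tendsto_penrose_of_tendsto_add_atTop
    · have hadd := tendsto_atTop_add_const_right _ (c₁ + c₂)
        (tendsto_tan_add_inv_cos_pi_div_two.const_mul_atTop hr)
      refine hadd.congr fun t => ?_
      rw [hx]
      ring
    · have hsub := (tendsto_tan_sub_inv_cos_pi_div_two.const_mul r).add_const (c₁ - c₂)
      rw [mul_zero, zero_add] at hsub
      refine hsub.congr fun t => ?_
      rw [hx]
      ring
  · constructor
    · linarith [neg_pi_div_two_lt_arctan (c₁ - c₂)]
    · linarith [arctan_lt_pi_div_two (c₁ - c₂)]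
end

section
/- The Penrose map 𝒫 is conformal for the Lorentz metric: for every point p = (p₁,p₂) ∈ ℝ² and all tangent vectors w₁, w₂ ∈ ℝ², the total derivative D𝒫(p) satisfies ⟨D𝒫(p)(w₁), D𝒫(p)(w₂)⟩ = (4 / ((1+(p₁+p₂)²)(1+(p₁−p₂)²))) · ⟨w₁, w₂⟩, and the conformal factor 4/((1+(p₁+p₂)²)(1+(p₁−p₂)²)) is strictly positive. -/
open Real

/-!
In null coordinates `u = x₁ + x₂`, `v = x₁ - x₂` the Lorentz form reads `(du dv' + dv du') / 2`,
while for a point written as `(a + b, a - b)` it reads `2 (da db' + db da')`. The Penrose map is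
`a = arctan u`, `b = arctan v`, so it rescales the form by `4 arctan'(u) arctan'(v)`.
-/

noncomputable def nullCoordMap (f g : ℝ → ℝ) (x : ℝ × ℝ) : ℝ × ℝ :=
  (f (x.1 + x.2) + g (x.1 - x.2), f (x.1 + x.2) - g (x.1 - x.2))

theorem penrose_eq_nullCoordMap : Penrose = nullCoordMap arctan arctan := rfl

section NullCoordMap

variable {f g : ℝ → ℝ} {f' g' : ℝ} {p : ℝ × ℝ}

theorem fderiv_nullCoordMap_apply (hf : HasDerivAt f f' (p.1 + p.2))
    (hg : HasDerivAt g g' (p.1 - p.2)) (w : ℝ × ℝ) :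
    fderiv ℝ (nullCoordMap f g) p w =
      (f' * (w.1 + w.2) + g' * (w.1 - w.2), f' * (w.1 + w.2) - g' * (w.1 - w.2)) := by
  have hu : HasFDerivAt (fun x : ℝ × ℝ => f (x.1 + x.2))
      (f' • (ContinuousLinearMap.fst ℝ ℝ ℝ + ContinuousLinearMap.snd ℝ ℝ ℝ)) p :=
    hf.comp_hasFDerivAt p (hasFDerivAt_fst.add hasFDerivAt_snd)
  have hv : HasFDerivAt (fun x : ℝ × ℝ => g (x.1 - x.2))
      (g' • (ContinuousLinearMap.fst ℝ ℝ ℝ - ContinuousLinearMap.snd ℝ ℝ ℝ)) p :=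
    hg.comp_hasFDerivAt p (hasFDerivAt_fst.sub hasFDerivAt_snd)
  have hP : HasFDerivAt (nullCoordMap f g) _ p := (hu.add hv).prodMk (hu.sub hv)
  rw [hP.fderiv]
  simp [mul_add]

theorem lin_fderiv_nullCoordMap (hf : HasDerivAt f f' (p.1 + p.2))
    (hg : HasDerivAt g g' (p.1 - p.2)) (w₁ w₂ : ℝ × ℝ) :
    lin (fderiv ℝ (nullCoordMap f g) p w₁) (fderiv ℝ (nullCoordMap f g) p w₂) =
      4 * f' * g' * lin w₁ w₂ := by
  rw [fderiv_nullCoordMap_apply hf hg, fderiv_nullCoordMap_apply hf hg, lin, lin]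
  ring

end NullCoordMap

/-- The Penrose map is conformal for the Lorentz metric, with conformal factor
`4 / ((1+(p₁+p₂)²)(1+(p₁−p₂)²)) > 0`. -/
theorem penrose_conformal (p : ℝ × ℝ) (w₁ w₂ : ℝ × ℝ) :
    lin (fderiv ℝ Penrose p w₁) (fderiv ℝ Penrose p w₂) =
      (4 / ((1 + (p.1 + p.2) ^ 2) * (1 + (p.1 - p.2) ^ 2))) * lin w₁ w₂ ∧
    0 < 4 / ((1 + (p.1 + p.2) ^ 2) * (1 + (p.1 - p.2) ^ 2)) := by
  refine ⟨?_, by positivity⟩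
  rw [penrose_eq_nullCoordMap,
    lin_fderiv_nullCoordMap (hasDerivAt_arctan _) (hasDerivAt_arctan _)]
  field_simp
end

section
/- Let x = (f, g) : I → ℝ² be a differentiable curve with f(t)² − g(t)² ≠ 0 for all t ∈ I. Then for all t ∈ I, the Lorentz squared norm of the derivative of 𝒫 ∘ σ ∘ x satisfies |(𝒫(σ(x(t))))'|² = 4(f'(t)² − g'(t)²) / Θ(t), where Θ(t) = (1+(f(t)+g(t))²)(1+(f(t)−g(t))²) and |(u,v)|² = u² − v². -/
open Real

/-- The Lorentz inversion `σ(v) = v / |v|²`. -/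
noncomputable def linv (v : ℝ × ℝ) : ℝ × ℝ := (lsq v)⁻¹ • v

open Topology

/-!
In the null coordinates `u = v₁ + v₂`, `w = v₁ - v₂` the Lorentz norm factors as `|v|² = u w`,
the inversion `σ` sends `(u, w)` to `(w⁻¹, u⁻¹)`, and `𝒫` acts by `2 arctan` on each null
coordinate. Hence the null coordinates of `(𝒫 ∘ σ ∘ x)'` are
`2 (arctan w⁻¹)' = -2 w' / (1 + w²)` and `2 (arctan u⁻¹)' = -2 u' / (1 + u²)`, and their product
is `4 u' w' / ((1 + u²)(1 + w²))` with `u' w' = f'² - g'²`.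
-/

lemma lsq_eq_mul (v : ℝ × ℝ) : lsq v = (v.1 + v.2) * (v.1 - v.2) := by
  unfold lsq; ring

lemma lsq_add_sub (p q : ℝ) : lsq (p + q, p - q) = 4 * p * q := by
  rw [lsq_eq_mul]; ring

lemma linv_fst_add_snd {v : ℝ × ℝ} (h : v.1 + v.2 ≠ 0) :
    (linv v).1 + (linv v).2 = (v.1 - v.2)⁻¹ := by
  simp only [linv, Prod.smul_fst, Prod.smul_snd, smul_eq_mul]
  rw [← mul_add, lsq_eq_mul, mul_inv, mul_right_comm, inv_mul_cancel₀ h, one_mul]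

lemma linv_fst_sub_snd {v : ℝ × ℝ} (h : v.1 - v.2 ≠ 0) :
    (linv v).1 - (linv v).2 = (v.1 + v.2)⁻¹ := by
  simp only [linv, Prod.smul_fst, Prod.smul_snd, smul_eq_mul]
  rw [← mul_sub, lsq_eq_mul, mul_inv, mul_assoc, inv_mul_cancel₀ h, mul_one]

lemma Penrose_linv {v : ℝ × ℝ} (h : lsq v ≠ 0) :
    Penrose (linv v) = (arctan (v.1 - v.2)⁻¹ + arctan (v.1 + v.2)⁻¹,
      arctan (v.1 - v.2)⁻¹ - arctan (v.1 + v.2)⁻¹) := by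
  rw [lsq_eq_mul] at h
  simp only [Penrose, linv_fst_add_snd (left_ne_zero_of_mul h),
    linv_fst_sub_snd (right_ne_zero_of_mul h)]

section ProdComponents

variable {𝕜 E F : Type*} [NontriviallyNormedField 𝕜] [NormedAddCommGroup E] [NormedSpace 𝕜 E]
  [NormedAddCommGroup F] [NormedSpace 𝕜 F] {f : 𝕜 → E × F} {f' : E × F} {t : 𝕜}

lemma HasDerivAt.fst (h : HasDerivAt f f' t) : HasDerivAt (fun s => (f s).1) f'.1 t :=
  (ContinuousLinearMap.fst 𝕜 E F).hasFDerivAt.comp_hasDerivAt t h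

lemma HasDerivAt.snd (h : HasDerivAt f f' t) : HasDerivAt (fun s => (f s).2) f'.2 t :=
  (ContinuousLinearMap.snd 𝕜 E F).hasFDerivAt.comp_hasDerivAt t h

end ProdComponents

lemma HasDerivAt.arctan_inv {f : ℝ → ℝ} {f' t : ℝ} (hf : HasDerivAt f f' t) (ht : f t ≠ 0) :
    HasDerivAt (fun s => Real.arctan (f s)⁻¹) (-f' / (1 + f t ^ 2)) t := by
  convert (hf.fun_inv ht).arctan using 1
  field_simp
  ring

/-- For a differentiable curve `x = (f,g)` with `f² − g² ≠ 0`, the Lorentz squared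
speed of `𝒫 ∘ σ ∘ x` is `|(𝒫(σ(x)))'|² = 4(f'² − g'²)/Θ`, where
`Θ = (1+(f+g)²)(1+(f−g)²)`. -/
theorem penrose_inversion_curve_speed (I : Set ℝ) (x x' : ℝ → ℝ × ℝ)
    (hx : ∀ t ∈ I, HasDerivAt x (x' t) t)
    (hne : ∀ t ∈ I, (x t).1 ^ 2 - (x t).2 ^ 2 ≠ 0) :
    ∀ t ∈ I, ∃ d : ℝ × ℝ, HasDerivAt (fun s => Penrose (linv (x s))) d t ∧
      lsq d = 4 * ((x' t).1 ^ 2 - (x' t).2 ^ 2) /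
        ((1 + ((x t).1 + (x t).2) ^ 2) * (1 + ((x t).1 - (x t).2) ^ 2)) := by
  intro t ht
  have hxt : HasDerivAt x (x' t) t := hx t ht
  have hlsq : lsq (x t) ≠ 0 := hne t ht
  have hlsq_mul := lsq_eq_mul (x t) ▸ hlsq
  have hU := (hxt.fst.fun_add hxt.snd).arctan_inv (left_ne_zero_of_mul hlsq_mul)
  have hW := (hxt.fst.fun_sub hxt.snd).arctan_inv (right_ne_zero_of_mul hlsq_mul)
  have hev : (fun s => Penrose (linv (x s))) =ᶠ[𝓝 t] fun s =>
      (arctan ((x s).1 - (x s).2)⁻¹ + arctan ((x s).1 + (x s).2)⁻¹,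
        arctan ((x s).1 - (x s).2)⁻¹ - arctan ((x s).1 + (x s).2)⁻¹) := by
    have hcont : ContinuousAt (fun s => lsq (x s)) t := by
      have := hxt.continuousAt
      unfold lsq
      fun_prop
    filter_upwards [hcont.eventually_ne hlsq] with s hs using Penrose_linv hs
  refine ⟨_, ((hW.add hU).prodMk (hW.sub hU)).congr_of_eventuallyEq hev, ?_⟩
  rw [lsq_add_sub]
  field_simp
  ring
end
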